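/- arXiv:1605.07493 — 3 statements merged into one kernel-verified Lean document; each statement's English description precedes it below -/
import Mathlib

section
/- Suppose the initial distance d₀ between the lead and ego vehicle satisfies d₀ ≥ D, where D is defined as follows: if a_e > a_l and ε* := (v_e − v_l + a_e·φ)/(a_e − a_l) lies in the interval [φ, min(t_f^e, t_f^l)), then D = max(0, v_e·φ + v_e²/(2a_e) − v_l²/(2a_l), J(ε*)); otherwise D = max(0, v_e·φ + v_e²/(2a_e) − v_l²/(2a_l)). Then for every ε ≥ 0 the inter-vehicle distance remains nonnegative: d₀ − J(ε) ≥ 0, i.e. the ego vehicle never collides with the lead vehicle during the emergency braking maneuver. -/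
/-!
Stopping from speed `v` with deceleration `a` takes the distance `v² / (2a)`. Hence, after the
delay, `J ε = S + vL(ε)² / (2 a_l) - vE(ε)² / (2 a_e)`, where
`S = v_e φ + v_e² / (2 a_e) - v_l² / (2 a_l)`: `J ≤ S` once the lead vehicle has stopped, and `J`
decreases once the ego vehicle has stopped. During the delay the ego speed is constant, so `J` is
convex there and `J ≤ max (J 0) (J φ)`. While both vehicles brake, `J` is a quadratic whose
derivative, the relative speed, has slope `a_l - a_e` and vanishes at `ε*`. If `a_e > a_l` and
`ε*` lies in this window, `J(ε*)` is the maximum; otherwise the maximum is at an end of the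
window, where `J ≤ S`, except at `φ` when the ego vehicle is already the slower one, and then
`J(φ) ≤ 0`.
-/

open intervalIntegral Set

theorem hasDerivAt_max_zero_sq (x : ℝ) : HasDerivAt (fun y : ℝ => max y 0 ^ 2) (2 * max x 0) x := by
  refine hasDerivAt_of_hasDerivAt_of_ne' (x := 0) (g := fun y => 2 * max y 0) (fun y hy => ?_)
    (by fun_prop) (by fun_prop) x
  rcases hy.lt_or_gt with hy | hy
  · have h : (fun y : ℝ => max y 0 ^ 2) =ᶠ[nhds y] fun _ => 0 :=
      (gt_mem_nhds hy).mono fun z hz => by simp [max_eq_right hz.le]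
    simpa [max_eq_right hy.le] using (hasDerivAt_const y (0:ℝ)).congr_of_eventuallyEq h
  · have h : (fun y : ℝ => max y 0 ^ 2) =ᶠ[nhds y] fun z => z ^ 2 :=
      (lt_mem_nhds hy).mono fun z hz => by simp [max_eq_left hz.le]
    simpa [max_eq_left hy.le] using (hasDerivAt_pow 2 y).congr_of_eventuallyEq h

theorem integral_max_sub_mul_zero (v a s t : ℝ) (ha : a ≠ 0) :
    ∫ τ in s..t, max (v - a * τ) 0 = (max (v - a * s) 0 ^ 2 - max (v - a * t) 0 ^ 2) / (2 * a) := by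
  have hderiv (τ : ℝ) :
      HasDerivAt (fun τ => -(max (v - a * τ) 0 ^ 2) / (2 * a)) (max (v - a * τ) 0) τ := by
    refine (((hasDerivAt_max_zero_sq (v - a * τ)).comp τ
      (((hasDerivAt_id τ).const_mul a).const_sub v)).neg.div_const (2 * a)).congr_deriv ?_
    field_simp
  rw [integral_eq_sub_of_hasDerivAt (fun τ _ => hderiv τ)
    ((by fun_prop : Continuous fun τ => max (v - a * τ) 0).intervalIntegrable _ _)]
  ring

namespace Braking

noncomputable section

def leadSpeed (vl al τ : ℝ) : ℝ := max (vl - al * τ) 0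

def egoSpeed (ve ae φ τ : ℝ) : ℝ := max (ve - ae * max (τ - φ) 0) 0

def netApproach (vl ve al ae φ ε : ℝ) : ℝ :=
  ∫ τ in (0:ℝ)..ε, (egoSpeed ve ae φ τ - leadSpeed vl al τ)

def stopDistDiff (vl ve al ae φ : ℝ) : ℝ := ve * φ + ve ^ 2 / (2 * ae) - vl ^ 2 / (2 * al)

/-- `netApproach` on `[φ, min (φ + ve / ae) (vl / al)]`, where both vehicles are braking. -/
def brakingApproach (vl ve al ae φ x : ℝ) : ℝ :=
  (ve - vl) * x + al * x ^ 2 / 2 - ae * (x - φ) ^ 2 / 2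

variable {vl ve al ae φ : ℝ}

theorem continuous_leadSpeed : Continuous (leadSpeed vl al) := by
  unfold leadSpeed; fun_prop

theorem continuous_egoSpeed : Continuous (egoSpeed ve ae φ) := by
  unfold egoSpeed; fun_prop

theorem leadSpeed_antitone (hal : 0 ≤ al) : Antitone (leadSpeed vl al) :=
  fun _ _ h => max_le_max_right _ (by nlinarith)

theorem brakingSpeeds_nonneg (hal : 0 < al) (hae : 0 < ae) {x : ℝ}
    (hxm : x ≤ min (φ + ve / ae) (vl / al)) : 0 ≤ ve - ae * (x - φ) ∧ 0 ≤ vl - al * x :=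
  ⟨sub_nonneg.2 ((le_div_iff₀' hae).1 (sub_le_iff_le_add'.2 (le_min_iff.1 hxm).1)),
    sub_nonneg.2 ((le_div_iff₀' hal).1 (le_min_iff.1 hxm).2)⟩

theorem egoSpeed_of_le {τ : ℝ} (hve : 0 ≤ ve) (hτ : τ ≤ φ) : egoSpeed ve ae φ τ = ve := by
  simp [egoSpeed, max_eq_right (sub_nonpos.2 hτ), hve]

theorem egoSpeed_of_ge {τ : ℝ} (hτ : φ ≤ τ) : egoSpeed ve ae φ τ = max (ve - ae * (τ - φ)) 0 := by
  rw [egoSpeed, max_eq_left (sub_nonneg.2 hτ)]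

theorem egoSpeed_eq_ite (hve : 0 ≤ ve) (τ : ℝ) :
    egoSpeed ve ae φ τ = if τ < φ then ve else max (ve - ae * (τ - φ)) 0 := by
  split_ifs with h
  · exact egoSpeed_of_le hve h.le
  · exact egoSpeed_of_ge (not_lt.1 h)

theorem integral_leadSpeed (hvl : 0 ≤ vl) (hal : al ≠ 0) (ε : ℝ) :
    ∫ τ in (0:ℝ)..ε, leadSpeed vl al τ = (vl ^ 2 - leadSpeed vl al ε ^ 2) / (2 * al) := by
  simp [leadSpeed, integral_max_sub_mul_zero _ _ _ _ hal, hvl]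

theorem integral_egoSpeed (hve : 0 ≤ ve) (hae : ae ≠ 0) (hφ : 0 ≤ φ) {ε : ℝ} (hε : φ ≤ ε) :
    ∫ τ in (0:ℝ)..ε, egoSpeed ve ae φ τ
      = ve * φ + (ve ^ 2 - egoSpeed ve ae φ ε ^ 2) / (2 * ae) := by
  have hint : ∀ a b, IntervalIntegrable (egoSpeed ve ae φ) MeasureTheory.volume a b :=
    fun _ _ => continuous_egoSpeed.intervalIntegrable _ _
  have hdelay : ∫ τ in (0:ℝ)..φ, egoSpeed ve ae φ τ = ve * φ := by
    rw [integral_congr (g := fun _ => ve) fun τ hτ => egoSpeed_of_le hve (by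
      rw [uIcc_of_le hφ] at hτ; exact hτ.2)]
    simp [mul_comm]
  have hbraking :
      ∫ τ in φ..ε, egoSpeed ve ae φ τ = (ve ^ 2 - egoSpeed ve ae φ ε ^ 2) / (2 * ae) := by
    have hshift : ∀ τ, ve - ae * (τ - φ) = ve + ae * φ - ae * τ := fun τ => by ring
    rw [integral_congr (g := fun τ => max (ve + ae * φ - ae * τ) 0) fun τ hτ => by
      rw [uIcc_of_le hε] at hτ; simp only [egoSpeed_of_ge hτ.1, hshift]]
    rw [integral_max_sub_mul_zero _ _ _ _ hae, egoSpeed_of_ge hε, hshift]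
    simp [hve]
  rw [← integral_add_adjacent_intervals (hint 0 φ) (hint φ ε), hdelay, hbraking]

theorem netApproach_of_ge (hvl : 0 ≤ vl) (hve : 0 ≤ ve) (hal : al ≠ 0) (hae : ae ≠ 0)
    (hφ : 0 ≤ φ) {ε : ℝ} (hε : φ ≤ ε) :
    netApproach vl ve al ae φ ε = stopDistDiff vl ve al ae φ
      + leadSpeed vl al ε ^ 2 / (2 * al) - egoSpeed ve ae φ ε ^ 2 / (2 * ae) := by
  rw [netApproach, integral_sub (continuous_egoSpeed.intervalIntegrable _ _)
    (continuous_leadSpeed.intervalIntegrable _ _), integral_egoSpeed hve hae hφ hε,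
    integral_leadSpeed hvl hal, stopDistDiff]
  ring

theorem brakingApproach_eq (hal : al ≠ 0) (hae : ae ≠ 0) (x : ℝ) :
    brakingApproach vl ve al ae φ x = stopDistDiff vl ve al ae φ
      + (vl - al * x) ^ 2 / (2 * al) - (ve - ae * (x - φ)) ^ 2 / (2 * ae) := by
  unfold brakingApproach stopDistDiff
  field_simp
  ring

theorem brakingApproach_taylor (x y : ℝ) :
    brakingApproach vl ve al ae φ y = brakingApproach vl ve al ae φ x
      + (ve - ae * (x - φ) - (vl - al * x)) * (y - x) - (ae - al) * (y - x) ^ 2 / 2 := by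
  unfold brakingApproach; ring

theorem hasDerivAt_netApproach (ε : ℝ) :
    HasDerivAt (netApproach vl ve al ae φ) (egoSpeed ve ae φ ε - leadSpeed vl al ε) ε :=
  ((continuous_egoSpeed.sub continuous_leadSpeed).integral_hasStrictDerivAt 0 ε).hasDerivAt

theorem convexOn_netApproach (hve : 0 ≤ ve) (hal : 0 ≤ al) :
    ConvexOn ℝ (Iic φ) (netApproach vl ve al ae φ) := by
  refine MonotoneOn.convexOn_of_deriv (convex_Iic φ)
    (fun ε _ => (hasDerivAt_netApproach ε).continuousAt.continuousWithinAt)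
    (fun ε _ => (hasDerivAt_netApproach ε).differentiableAt.differentiableWithinAt) ?_
  rw [interior_Iic]
  intro x hx y hy hxy
  rw [(hasDerivAt_netApproach x).deriv, (hasDerivAt_netApproach y).deriv,
    egoSpeed_of_le hve (le_of_lt hx), egoSpeed_of_le hve (le_of_lt hy)]
  linarith [leadSpeed_antitone (vl := vl) hal hxy]

theorem netApproach_eq_brakingApproach (hvl : 0 ≤ vl) (hve : 0 ≤ ve) (hal : 0 < al) (hae : 0 < ae)
    (hφ : 0 ≤ φ) {x : ℝ} (hx : φ ≤ x) (hxm : x ≤ min (φ + ve / ae) (vl / al)) :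
    netApproach vl ve al ae φ x = brakingApproach vl ve al ae φ x := by
  obtain ⟨hu, hw⟩ := brakingSpeeds_nonneg hal hae hxm
  rw [netApproach_of_ge hvl hve hal.ne' hae.ne' hφ hx, brakingApproach_eq hal.ne' hae.ne',
    egoSpeed_of_ge hx, leadSpeed, max_eq_left hu, max_eq_left hw]

theorem netApproach_le_stopDistDiff (hvl : 0 ≤ vl) (hve : 0 ≤ ve) (hal : 0 < al) (hae : 0 < ae)
    (hφ : 0 ≤ φ) {ε : ℝ} (hε : φ ≤ ε) (hεT : vl / al ≤ ε) :
    netApproach vl ve al ae φ ε ≤ stopDistDiff vl ve al ae φ := by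
  have hstop : leadSpeed vl al ε = 0 := by
    rw [div_le_iff₀ hal] at hεT
    exact max_eq_right (by linarith)
  rw [netApproach_of_ge hvl hve hal.ne' hae.ne' hφ hε, hstop, zero_pow two_ne_zero, zero_div,
    add_zero]
  exact sub_le_self _ (by positivity)

theorem netApproach_le_of_egoStop (hvl : 0 ≤ vl) (hve : 0 ≤ ve) (hal : 0 < al) (hae : 0 < ae)
    (hφ : 0 ≤ φ) {ε : ℝ} (hεW : φ + ve / ae ≤ ε) :
    netApproach vl ve al ae φ ε ≤ netApproach vl ve al ae φ (φ + ve / ae) := by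
  have hW : φ ≤ φ + ve / ae := le_add_of_nonneg_right (by positivity)
  have hstop : ∀ t, φ + ve / ae ≤ t → egoSpeed ve ae φ t = 0 := fun t ht => by
    have hbrake : ve ≤ ae * (t - φ) := by
      rw [← le_sub_iff_add_le', div_le_iff₀ hae] at ht; linarith
    rw [egoSpeed_of_ge (hW.trans ht), max_eq_right (by linarith)]
  rw [netApproach_of_ge hvl hve hal.ne' hae.ne' hφ (hW.trans hεW),
    netApproach_of_ge hvl hve hal.ne' hae.ne' hφ hW, hstop _ hεW, hstop _ le_rfl]
  gcongr
  · exact le_max_right _ _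
  · exact leadSpeed_antitone hal.le hεW

theorem brakingApproach_le_stopDistDiff (hal : 0 < al) (hae : 0 < ae) {x : ℝ}
    (h : ae * (vl - al * x) ^ 2 ≤ al * (ve - ae * (x - φ)) ^ 2) :
    brakingApproach vl ve al ae φ x ≤ stopDistDiff vl ve al ae φ := by
  have : (vl - al * x) ^ 2 / (2 * al) ≤ (ve - ae * (x - φ)) ^ 2 / (2 * ae) := by
    rw [div_le_div_iff₀ (by positivity) (by positivity)]
    linarith
  linarith [brakingApproach_eq (vl := vl) (ve := ve) (φ := φ) hal.ne' hae.ne' x]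

theorem brakingApproach_delay_nonpos (hφ : 0 ≤ φ) (hal : 0 ≤ al) (h : ve ≤ vl - al * φ) :
    brakingApproach vl ve al ae φ φ ≤ 0 := by
  unfold brakingApproach
  nlinarith [mul_nonneg hφ (sub_nonneg.2 h), mul_nonneg hal (sq_nonneg φ)]

theorem brakingApproach_le_of_le (hal : 0 < al) (hae : 0 < ae) (hea : ae ≤ al) (hφ : 0 ≤ φ)
    {x : ℝ} (hx : φ ≤ x) (hxm : x ≤ min (φ + ve / ae) (vl / al)) :
    brakingApproach vl ve al ae φ x ≤ max 0 (stopDistDiff vl ve al ae φ) := by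
  have hw := (brakingSpeeds_nonneg hal hae hxm).2
  have hleadSlower : ∀ y, 0 ≤ vl - al * y → vl - al * y ≤ ve - ae * (y - φ) →
      brakingApproach vl ve al ae φ y ≤ stopDistDiff vl ve al ae φ := fun y hwy hwuy =>
    brakingApproach_le_stopDistDiff hal hae
      (by nlinarith [pow_le_pow_left₀ hwy hwuy 2, sq_nonneg (ve - ae * (y - φ))])
  rcases le_or_gt (vl - al * x) (ve - ae * (x - φ)) with hwu | huw
  · exact (hleadSlower x hw hwu).trans (le_max_right _ _)
  have hq : brakingApproach vl ve al ae φ x ≤ brakingApproach vl ve al ae φ φ := by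
    rw [brakingApproach_taylor x φ]
    nlinarith [mul_nonneg (sub_nonneg.2 hx) (sub_nonneg.2 huw.le),
      mul_nonneg (sub_nonneg.2 hea) (sq_nonneg (φ - x))]
  rcases le_or_gt ve (vl - al * φ) with h | h
  · exact hq.trans ((brakingApproach_delay_nonpos hφ hal.le h).trans (le_max_left _ _))
  · exact hq.trans ((hleadSlower φ (by nlinarith) (by simpa using h.le)).trans (le_max_right _ _))

theorem brakingApproach_le_of_lt (hal : 0 < al) (hea : al < ae) (hφ : 0 ≤ φ) {d x : ℝ}
    (h0 : 0 ≤ d) (hS : stopDistDiff vl ve al ae φ ≤ d)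
    (hstar : φ ≤ (ve - vl + ae * φ) / (ae - al) →
      (ve - vl + ae * φ) / (ae - al) < min (φ + ve / ae) (vl / al) →
      brakingApproach vl ve al ae φ ((ve - vl + ae * φ) / (ae - al)) ≤ d)
    (hx : φ ≤ x) (hxm : x ≤ min (φ + ve / ae) (vl / al)) :
    brakingApproach vl ve al ae φ x ≤ d := by
  set εs := (ve - vl + ae * φ) / (ae - al) with hεs
  set m := min (φ + ve / ae) (vl / al) with hm
  have hae : 0 < ae := hal.trans hea
  have hk : 0 < ae - al := sub_pos.2 hea
  have hspeed : ∀ y, ve - ae * (y - φ) - (vl - al * y) = (ae - al) * (εs - y) := fun y => by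
    rw [hεs]; field_simp; ring
  by_cases hcond : φ ≤ εs ∧ εs < m
  · calc brakingApproach vl ve al ae φ x ≤ brakingApproach vl ve al ae φ εs := by
          rw [brakingApproach_taylor εs x, hspeed, sub_self, mul_zero, zero_mul, add_zero]
          nlinarith [mul_nonneg hk.le (sq_nonneg (x - εs))]
      _ ≤ d := hstar hcond.1 hcond.2
  rcases not_and_or.1 hcond with h | h
  · have hεφ : εs < φ := not_le.1 h
    have hdelay : ve ≤ vl - al * φ := by
      nlinarith [hspeed φ, mul_nonneg hk.le (sub_nonneg.2 hεφ.le)]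
    calc brakingApproach vl ve al ae φ x ≤ brakingApproach vl ve al ae φ φ := by
          rw [brakingApproach_taylor φ x, hspeed]
          nlinarith [mul_nonneg (mul_nonneg hk.le (sub_nonneg.2 hεφ.le)) (sub_nonneg.2 hx),
            mul_nonneg hk.le (sq_nonneg (x - φ))]
      _ ≤ 0 := brakingApproach_delay_nonpos hφ hal.le hdelay
      _ ≤ d := h0
  · have hmε : m ≤ εs := not_lt.1 h
    have hleadStopped : vl - al * m = 0 := by
      rcases min_choice (φ + ve / ae) (vl / al) with hmW | hmT
      · have hegoStopped : ve - ae * (m - φ) = 0 := by rw [hm, hmW]; field_simp; ring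
        have hwm := (brakingSpeeds_nonneg hal hae hm.le).2
        nlinarith [hspeed m, mul_nonneg hk.le (sub_nonneg.2 hmε)]
      · rw [hm, hmT]; field_simp; ring
    calc brakingApproach vl ve al ae φ x ≤ brakingApproach vl ve al ae φ m := by
          rw [brakingApproach_taylor m x, hspeed]
          nlinarith [mul_nonneg (mul_nonneg hk.le (sub_nonneg.2 hmε)) (sub_nonneg.2 hxm),
            mul_nonneg hk.le (sq_nonneg (x - m))]
      _ ≤ stopDistDiff vl ve al ae φ :=
          brakingApproach_le_stopDistDiff hal hae
            (by rw [hleadStopped, zero_pow two_ne_zero, mul_zero]; positivity)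
      _ ≤ d := hS

theorem brakingApproach_le (hal : 0 < al) (hae : 0 < ae) (hφ : 0 ≤ φ) {d x : ℝ}
    (h0 : 0 ≤ d) (hS : stopDistDiff vl ve al ae φ ≤ d)
    (hstar : al < ae → φ ≤ (ve - vl + ae * φ) / (ae - al) →
      (ve - vl + ae * φ) / (ae - al) < min (φ + ve / ae) (vl / al) →
      brakingApproach vl ve al ae φ ((ve - vl + ae * φ) / (ae - al)) ≤ d)
    (hx : φ ≤ x) (hxm : x ≤ min (φ + ve / ae) (vl / al)) :
    brakingApproach vl ve al ae φ x ≤ d := by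
  rcases le_or_gt ae al with hea | hea
  · exact (brakingApproach_le_of_le hal hae hea hφ hx hxm).trans (max_le h0 hS)
  · exact brakingApproach_le_of_lt hal hea hφ h0 hS (hstar hea) hx hxm

theorem netApproach_le (hvl : 0 ≤ vl) (hve : 0 ≤ ve) (hal : 0 < al) (hae : 0 < ae) (hφ : 0 ≤ φ)
    {d : ℝ} (h0 : 0 ≤ d) (hS : stopDistDiff vl ve al ae φ ≤ d)
    (hq : ∀ x, φ ≤ x → x ≤ min (φ + ve / ae) (vl / al) → brakingApproach vl ve al ae φ x ≤ d)
    {ε : ℝ} (hε : 0 ≤ ε) :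
    netApproach vl ve al ae φ ε ≤ d := by
  have hafter : ∀ ε, φ ≤ ε → netApproach vl ve al ae φ ε ≤ d := by
    intro ε hε
    rcases le_or_gt (vl / al) ε with hT | hT
    · exact (netApproach_le_stopDistDiff hvl hve hal hae hφ hε hT).trans hS
    rcases le_or_gt ε (φ + ve / ae) with hW | hW
    · have hεm := le_min hW hT.le
      rw [netApproach_eq_brakingApproach hvl hve hal hae hφ hε hεm]
      exact hq ε hε hεm
    · have hφW : φ ≤ φ + ve / ae := le_add_of_nonneg_right (by positivity)
      have hWm : φ + ve / ae ≤ min (φ + ve / ae) (vl / al) := le_min le_rfl (hW.trans hT).le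
      calc netApproach vl ve al ae φ ε ≤ netApproach vl ve al ae φ (φ + ve / ae) :=
            netApproach_le_of_egoStop hvl hve hal hae hφ hW.le
        _ = brakingApproach vl ve al ae φ (φ + ve / ae) :=
            netApproach_eq_brakingApproach hvl hve hal hae hφ hφW hWm
        _ ≤ d := hq _ hφW hWm
  rcases le_total φ ε with h | h
  · exact hafter ε h
  calc netApproach vl ve al ae φ ε
      ≤ max (netApproach vl ve al ae φ 0) (netApproach vl ve al ae φ φ) :=
        (convexOn_netApproach hve hal.le).le_max_of_mem_Icc (mem_Iic.2 hφ) (mem_Iic.2 le_rfl)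
          ⟨hε, h⟩
    _ ≤ d := max_le (by simpa [netApproach] using h0) (hafter φ le_rfl)

end

end Braking

open Braking

/-- If the initial distance `d0` is at least the closed-form minimum safety
distance `D`, then the inter-vehicle distance `d0 - J ε` stays nonnegative for all `ε ≥ 0`. -/
theorem min_safety_distance_guarantees_no_collision
    (vl ve al ae φ : ℝ)
    (hvl : 0 ≤ vl) (hve : 0 ≤ ve) (hal : 0 < al) (hae : 0 < ae) (hφ : 0 ≤ φ)
    (vL vE J : ℝ → ℝ)
    (hvL : ∀ τ, vL τ = max (vl - al * τ) 0)
    (hvE : ∀ τ, vE τ = if τ < φ then ve else max (ve - ae * (τ - φ)) 0)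
    (hJ : ∀ ε, J ε = ∫ τ in (0:ℝ)..ε, (vE τ - vL τ))
    (d0 : ℝ)
    (hd0 : d0 ≥
      (if al < ae ∧ φ ≤ (ve - vl + ae * φ) / (ae - al) ∧
          (ve - vl + ae * φ) / (ae - al) < min (φ + ve / ae) (vl / al)
        then max 0 (max (ve * φ + ve ^ 2 / (2 * ae) - vl ^ 2 / (2 * al))
              (J ((ve - vl + ae * φ) / (ae - al))))
        else max 0 (ve * φ + ve ^ 2 / (2 * ae) - vl ^ 2 / (2 * al)))) :
    ∀ ε : ℝ, 0 ≤ ε → d0 - J ε ≥ 0 := by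
  obtain rfl : J = netApproach vl ve al ae φ := funext fun ε => by
    simp only [hJ, netApproach, hvE, hvL, egoSpeed_eq_ite hve, leadSpeed]
  obtain ⟨h0, hS, hstar⟩ : 0 ≤ d0 ∧ stopDistDiff vl ve al ae φ ≤ d0 ∧
      (al < ae ∧ φ ≤ (ve - vl + ae * φ) / (ae - al) ∧
          (ve - vl + ae * φ) / (ae - al) < min (φ + ve / ae) (vl / al) →
        netApproach vl ve al ae φ ((ve - vl + ae * φ) / (ae - al)) ≤ d0) := by
    split_ifs at hd0 with hcond
    · exact ⟨le_of_max_le_left hd0, le_of_max_le_left (le_of_max_le_right hd0),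
        fun _ => le_of_max_le_right (le_of_max_le_right hd0)⟩
    · exact ⟨le_of_max_le_left hd0, le_of_max_le_right hd0, fun h => absurd h hcond⟩
  intro ε hε
  refine sub_nonneg.2 (netApproach_le hvl hve hal hae hφ h0 hS (fun x hx hxm => ?_) hε)
  refine brakingApproach_le hal hae hφ h0 hS (fun hea hφs hsm => ?_) hx hxm
  rw [← netApproach_eq_brakingApproach hvl hve hal hae hφ hφs hsm.le]
  exact hstar ⟨hea, hφs, hsm⟩
end

section
/- The minimum safety distance sup_{ε ≥ 0} J(ε) admits the following closed form obtained by enumerating the candidate maximizers: if a_e > a_l and ε* := (v_e − v_l + a_e·φ)/(a_e − a_l) lies in [φ, min(t_f^e, t_f^l)), then sup_{ε ≥ 0} J(ε) = max(0, v_e·φ + v_e²/(2a_e) − v_l²/(2a_l), J(ε*)); otherwise sup_{ε ≥ 0} J(ε) = max(0, v_e·φ + v_e²/(2a_e) − v_l²/(2a_l)). Moreover the supremum is attained at some ε ≥ 0. -/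
/-!
`J` is the integral of the approach rate `f = vE - vL`. Before the delay `φ` has elapsed, `f` is
nondecreasing; afterwards both speeds are positive parts of affine functions, so the sign of `f`
follows that of the affine gap `(ve - ae (τ - φ)) - (vl - al τ)`, which vanishes at `ε*`.
Hence there is a time `c` (namely `ε*` if `al < ae` and `φ ≤ ε*`, otherwise any time after both
vehicles have stopped) such that on `[0, c]` the rate never turns from positive to negative and
`f ≤ 0` after `c`. For such a rate, `∫₀^ε f ≤ max 0 (∫₀^c f)` for every `ε ≥ 0`. Once both
vehicles have stopped, `J` equals `ve φ + ve² / (2 ae) - vl² / (2 al)`; this also covers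
`c = ε* ≥ min (t_f^e, t_f^l)`, since at `ε*` one vehicle has stopped exactly when the other has.
-/

open intervalIntegral Set

def NoDownCrossingOn (f : ℝ → ℝ) (s : Set ℝ) : Prop :=
  ∀ ⦃x⦄, x ∈ s → ∀ ⦃y⦄, y ∈ s → x ≤ y → 0 < f x → 0 ≤ f y

theorem noDownCrossingOn_Icc_of_monotoneOn {f : ℝ → ℝ} {a b c : ℝ}
    (hmono : MonotoneOn f (Icc a b)) (h : NoDownCrossingOn f (Icc b c)) :
    NoDownCrossingOn f (Icc a c) := by
  intro x hx y hy hxy hfx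
  rcases le_total y b with hyb | hby
  · exact hfx.le.trans (hmono ⟨hx.1, hxy.trans hyb⟩ ⟨hx.1.trans hxy, hyb⟩ hxy)
  rcases le_total x b with hxb | hbx
  · have hfb : 0 < f b := hfx.trans_le (hmono ⟨hx.1, hxb⟩ ⟨hx.1.trans hxb, le_rfl⟩ hxb)
    exact h ⟨le_rfl, hby.trans hy.2⟩ ⟨hby, hy.2⟩ hby hfb
  · exact h ⟨hbx, hx.2⟩ ⟨hby, hy.2⟩ hxy hfx

theorem isGreatest_integral_of_noDownCrossingOn {f : ℝ → ℝ} {a c : ℝ} (hf : Continuous f)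
    (hac : a ≤ c) (hcross : NoDownCrossingOn f (Icc a c)) (hneg : ∀ t, c ≤ t → f t ≤ 0) :
    IsGreatest ((fun ε => ∫ τ in a..ε, f τ) '' {ε | a ≤ ε})
      (max 0 (∫ τ in a..c, f τ)) := by
  refine ⟨?_, ?_⟩
  · rcases max_choice 0 (∫ τ in a..c, f τ) with h | h <;> rw [h]
    · exact ⟨a, le_refl a, integral_same⟩
    · exact ⟨c, hac, rfl⟩
  rintro _ ⟨ε, hε, rfl⟩
  have hsplit : ∫ τ in a..ε, f τ = (∫ τ in a..c, f τ) - ∫ τ in ε..c, f τ := by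
    rw [eq_sub_iff_add_eq, integral_add_adjacent_intervals (hf.intervalIntegrable _ _)
      (hf.intervalIntegrable _ _)]
  suffices h : 0 ≤ ∫ τ in ε..c, f τ ∨ ∫ τ in a..ε, f τ ≤ 0 by
    rcases h with h | h
    · exact le_max_of_le_right (by simp only [hsplit]; linarith)
    · exact le_max_of_le_left h
  rcases le_total c ε with hcε | hεc
  · left
    rw [integral_symm, neg_nonneg]
    simpa using integral_nonneg hcε fun t ht => neg_nonneg.2 (hneg t ht.1)
  by_cases hpos : ∃ s ∈ Icc a ε, 0 < f s
  · obtain ⟨s, hs, hfs⟩ := hpos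
    exact .inl <| integral_nonneg hεc fun t ht =>
      hcross ⟨hs.1, hs.2.trans hεc⟩ ⟨hε.trans ht.1, ht.2⟩ (hs.2.trans ht.1) hfs
  · simp only [not_exists, not_and, not_lt] at hpos
    right
    simpa using integral_nonneg hε fun t ht => neg_nonneg.2 (hpos t ht)

noncomputable def brakingSpeed (v a τ : ℝ) : ℝ := max (v - a * τ) 0

@[fun_prop]
theorem continuous_brakingSpeed (v a : ℝ) : Continuous (brakingSpeed v a) := by
  unfold brakingSpeed; fun_prop

theorem antitone_brakingSpeed (v : ℝ) {a : ℝ} (ha : 0 ≤ a) : Antitone (brakingSpeed v a) :=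
  fun _ _ h => max_le_max_right 0 (by nlinarith)

theorem brakingSpeed_eq_zero {v a τ : ℝ} (ha : 0 < a) (hτ : v / a ≤ τ) :
    brakingSpeed v a τ = 0 := by
  rw [div_le_iff₀ ha] at hτ
  exact max_eq_right (by linarith)

theorem integral_brakingSpeed {v a t : ℝ} (hv : 0 ≤ v) (ha : 0 < a) (ht : v / a ≤ t) :
    ∫ τ in (0:ℝ)..t, brakingSpeed v a τ = v ^ 2 / (2 * a) := by
  have hint := (continuous_brakingSpeed v a).intervalIntegrable (μ := MeasureTheory.volume)
  have hbraking :
      ∫ τ in (0:ℝ)..v / a, brakingSpeed v a τ = ∫ τ in (0:ℝ)..v / a, (v - a * τ) := by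
    refine integral_congr fun τ hτ => max_eq_left ?_
    rw [uIcc_of_le (by positivity), mem_Icc, le_div_iff₀ ha] at hτ
    linarith
  have hstopped : ∫ τ in v / a..t, brakingSpeed v a τ = 0 := by
    rw [integral_congr (g := fun _ => 0) fun τ hτ => ?_, integral_zero]
    exact brakingSpeed_eq_zero ha (by rw [uIcc_of_le ht] at hτ; exact hτ.1)
  rw [← integral_add_adjacent_intervals (hint 0 (v / a)) (hint (v / a) t), hbraking, hstopped,
    add_zero, integral_sub intervalIntegrable_const
    ((continuous_const_mul a).intervalIntegrable _ _), integral_const_mul, integral_const,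
    integral_id, smul_eq_mul]
  field_simp
  ring

theorem integral_delayed_brakingSpeed {v a φ t : ℝ} (hv : 0 ≤ v) (ha : 0 < a) (hφ : 0 ≤ φ)
    (ht : φ + v / a ≤ t) :
    ∫ τ in (0:ℝ)..t, brakingSpeed v a (max (τ - φ) 0) = v * φ + v ^ 2 / (2 * a) := by
  have hint : ∀ b c : ℝ, IntervalIntegrable (fun τ => brakingSpeed v a (max (τ - φ) 0))
      MeasureTheory.volume b c :=
    Continuous.intervalIntegrable (by fun_prop)
  have hdelay : ∫ τ in (0:ℝ)..φ, brakingSpeed v a (max (τ - φ) 0) = v * φ := by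
    rw [integral_congr (g := fun _ => v) fun τ hτ => ?_, integral_const, smul_eq_mul, sub_zero,
      mul_comm]
    rw [uIcc_of_le hφ] at hτ
    simp [brakingSpeed, max_eq_right (sub_nonpos.2 hτ.2), hv]
  have hbraking : ∫ τ in φ..t, brakingSpeed v a (max (τ - φ) 0) = v ^ 2 / (2 * a) := by
    rw [integral_congr (g := fun τ => brakingSpeed v a (τ - φ)) fun τ hτ => ?_,
      integral_comp_sub_right (brakingSpeed v a), sub_self,
      integral_brakingSpeed hv ha (by linarith)]
    rw [uIcc_of_le (by linarith [div_nonneg hv ha.le])] at hτ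
    simp [max_eq_left (sub_nonneg.2 hτ.1)]
  rw [← integral_add_adjacent_intervals (hint 0 φ) (hint φ t), hdelay, hbraking]

/-- For `0 ≤ ve`, the first term is the paper's delayed ego speed `vE`. -/
noncomputable def approachRate (vl ve al ae φ τ : ℝ) : ℝ :=
  brakingSpeed ve ae (max (τ - φ) 0) - brakingSpeed vl al τ

/-- The paper's `ε*`: where the unclipped speed lines `ve - ae (τ - φ)` and `vl - al τ` meet. -/
noncomputable def crossingTime (vl ve al ae φ : ℝ) : ℝ := (ve - vl + ae * φ) / (ae - al)

section

variable {vl ve al ae φ τ : ℝ}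

theorem continuous_approachRate : Continuous (approachRate vl ve al ae φ) := by
  unfold approachRate; fun_prop

theorem monotoneOn_approachRate (hal : 0 ≤ al) :
    MonotoneOn (approachRate vl ve al ae φ) (Iic φ) := by
  intro x hx y hy hxy
  simp only [approachRate, max_eq_right (sub_nonpos.2 (mem_Iic.1 hx)),
    max_eq_right (sub_nonpos.2 (mem_Iic.1 hy))]
  linarith [antitone_brakingSpeed vl hal hxy]

theorem approachRate_of_le (hτ : φ ≤ τ) :
    approachRate vl ve al ae φ τ = brakingSpeed ve ae (τ - φ) - brakingSpeed vl al τ := by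
  rw [approachRate, max_eq_left (sub_nonneg.2 hτ)]

theorem approachRate_nonneg (hτ : φ ≤ τ) (h : vl - al * τ ≤ ve - ae * (τ - φ)) :
    0 ≤ approachRate vl ve al ae φ τ := by
  rw [approachRate_of_le hτ, sub_nonneg]
  exact max_le_max_right 0 h

theorem approachRate_nonpos (hτ : φ ≤ τ) (h : ve - ae * (τ - φ) ≤ vl - al * τ) :
    approachRate vl ve al ae φ τ ≤ 0 := by
  rw [approachRate_of_le hτ, sub_nonpos]
  exact max_le_max_right 0 h

theorem lt_of_approachRate_pos (hτ : φ ≤ τ) (h : 0 < approachRate vl ve al ae φ τ) :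
    vl - al * τ < ve - ae * (τ - φ) :=
  lt_of_not_ge fun h' => (approachRate_nonpos hτ h').not_gt h

theorem integral_approachRate_of_stopped {t : ℝ} (hvl : 0 ≤ vl) (hve : 0 ≤ ve) (hal : 0 < al)
    (hae : 0 < ae) (hφ : 0 ≤ φ) (hte : φ + ve / ae ≤ t) (htl : vl / al ≤ t) :
    ∫ τ in (0:ℝ)..t, approachRate vl ve al ae φ τ =
      ve * φ + ve ^ 2 / (2 * ae) - vl ^ 2 / (2 * al) := by
  unfold approachRate
  rw [integral_sub (Continuous.intervalIntegrable (by fun_prop) _ _)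
    (Continuous.intervalIntegrable (by fun_prop) _ _),
    integral_delayed_brakingSpeed hve hae hφ hte, integral_brakingSpeed hvl hal htl]

theorem gap_eq_mul_crossingTime_sub (h : al ≠ ae) (τ : ℝ) :
    (ve - ae * (τ - φ)) - (vl - al * τ) = (ae - al) * (crossingTime vl ve al ae φ - τ) := by
  rw [crossingTime, mul_sub (ae - al), mul_div_cancel₀ _ (sub_ne_zero.2 h.symm)]
  ring

theorem stopTimes_le_crossingTime (hal : 0 < al) (hae : 0 < ae) (hlt : al < ae)
    (h : min (φ + ve / ae) (vl / al) ≤ crossingTime vl ve al ae φ) :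
    φ + ve / ae ≤ crossingTime vl ve al ae φ ∧ vl / al ≤ crossingTime vl ve al ae φ := by
  set e := crossingTime vl ve al ae φ
  have hgap := gap_eq_mul_crossingTime_sub (vl := vl) (ve := ve) (φ := φ) hlt.ne e
  rw [sub_self, mul_zero, sub_eq_zero] at hgap
  have hiff : φ + ve / ae ≤ e ↔ vl / al ≤ e := by
    rw [← le_sub_iff_add_le', div_le_iff₀ hae, div_le_iff₀ hal]
    constructor <;> intro <;> linarith
  rcases min_le_iff.1 h with h | h
  · exact ⟨h, hiff.1 h⟩
  · exact ⟨hiff.2 h, h⟩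

theorem isGreatest_approach_of_crossing (hal : 0 ≤ al) (hφ : 0 ≤ φ)
    (hlt : al < ae) (hφe : φ ≤ crossingTime vl ve al ae φ) :
    IsGreatest
      ((fun ε => ∫ τ in (0:ℝ)..ε, approachRate vl ve al ae φ τ) '' {ε | 0 ≤ ε})
      (max 0 (∫ τ in (0:ℝ)..crossingTime vl ve al ae φ, approachRate vl ve al ae φ τ)) := by
  have hgap := gap_eq_mul_crossingTime_sub (vl := vl) (ve := ve) (φ := φ) hlt.ne
  have hpos : 0 < ae - al := sub_pos.2 hlt
  refine isGreatest_integral_of_noDownCrossingOn continuous_approachRate (hφ.trans hφe)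
    (noDownCrossingOn_Icc_of_monotoneOn ((monotoneOn_approachRate hal).mono Icc_subset_Iic_self)
      fun _ _ y hy _ _ => approachRate_nonneg hy.1 ?_)
    fun t ht => approachRate_nonpos (hφe.trans ht) ?_
  · nlinarith [hgap y, mul_nonneg hpos.le (sub_nonneg.2 hy.2)]
  · nlinarith [hgap t, mul_nonneg hpos.le (sub_nonneg.2 ht)]

theorem isGreatest_approach_of_not_crossing {T : ℝ} (hve : 0 ≤ ve) (hal : 0 < al)
    (hae : 0 < ae) (hφ : 0 ≤ φ) (hcross : ¬(al < ae ∧ φ ≤ crossingTime vl ve al ae φ))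
    (hte : φ + ve / ae ≤ T) (htl : vl / al ≤ T) :
    IsGreatest
      ((fun ε => ∫ τ in (0:ℝ)..ε, approachRate vl ve al ae φ τ) '' {ε | 0 ≤ ε})
      (max 0 (∫ τ in (0:ℝ)..T, approachRate vl ve al ae φ τ)) := by
  have hφT : φ ≤ T := le_trans (le_add_of_nonneg_right (div_nonneg hve hae.le)) hte
  refine isGreatest_integral_of_noDownCrossingOn continuous_approachRate (hφ.trans hφT)
    (noDownCrossingOn_Icc_of_monotoneOn ((monotoneOn_approachRate hal.le).mono Icc_subset_Iic_self)
      fun x hx y hy hxy hfx => approachRate_nonneg hy.1 ?_) fun t ht => ?_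
  · have hgapx := lt_of_approachRate_pos hx.1 hfx
    rcases le_or_gt ae al with hle | hlt
    · nlinarith [mul_le_mul_of_nonneg_left hxy (sub_nonneg.2 hle)]
    · have hgap := gap_eq_mul_crossingTime_sub (vl := vl) (ve := ve) (φ := φ) hlt.ne
      have hex : crossingTime vl ve al ae φ < x :=
        (lt_of_not_ge fun h => hcross ⟨hlt, h⟩).trans_le hx.1
      nlinarith [hgap x, mul_pos (sub_pos.2 hlt) (sub_pos.2 hex)]
  · rw [approachRate_of_le (hφT.trans ht), brakingSpeed_eq_zero hae (by linarith),
      brakingSpeed_eq_zero hal (htl.trans ht), sub_zero]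

end

/-- Closed form for the minimum safety distance `sup_{ε ≥ 0} J(ε)`, obtained by
enumerating the candidate maximizers; moreover the supremum is attained. -/
theorem min_safety_distance_closed_form
    (vl ve al ae φ : ℝ)
    (hvl : 0 ≤ vl) (hve : 0 ≤ ve) (hal : 0 < al) (hae : 0 < ae) (hφ : 0 ≤ φ)
    (vL vE J : ℝ → ℝ)
    (hvL : ∀ τ, vL τ = max (vl - al * τ) 0)
    (hvE : ∀ τ, vE τ = if τ < φ then ve else max (ve - ae * (τ - φ)) 0)
    (hJ : ∀ ε, J ε = ∫ τ in (0:ℝ)..ε, (vE τ - vL τ)) :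
    IsGreatest (J '' {ε : ℝ | 0 ≤ ε})
      (if al < ae ∧ φ ≤ (ve - vl + ae * φ) / (ae - al) ∧
          (ve - vl + ae * φ) / (ae - al) < min (φ + ve / ae) (vl / al)
        then max 0 (max (ve * φ + ve ^ 2 / (2 * ae) - vl ^ 2 / (2 * al))
              (J ((ve - vl + ae * φ) / (ae - al))))
        else max 0 (ve * φ + ve ^ 2 / (2 * ae) - vl ^ 2 / (2 * al))) := by
  have hrate : ∀ τ, vE τ - vL τ = approachRate vl ve al ae φ τ := fun τ => by
    rw [hvE, hvL, approachRate, brakingSpeed, brakingSpeed]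
    split_ifs with h
    · rw [max_eq_right (sub_nonpos.2 h.le), mul_zero, sub_zero, max_eq_left hve]
    · rw [max_eq_left (sub_nonneg.2 (not_lt.1 h))]
  obtain rfl : J = fun ε => ∫ τ in (0:ℝ)..ε, approachRate vl ve al ae φ τ :=
    funext fun ε => by simp only [hJ, hrate]
  beta_reduce
  rw [show (ve - vl + ae * φ) / (ae - al) = crossingTime vl ve al ae φ from rfl]
  have hT := integral_approachRate_of_stopped hvl hve hal hae hφ
    (le_max_left (φ + ve / ae) (vl / al)) (le_max_right _ _)
  by_cases hcross : al < ae ∧ φ ≤ crossingTime vl ve al ae φ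
  · have hmax := isGreatest_approach_of_crossing hal.le hφ hcross.1 hcross.2
    split_ifs with hcond
    · have hD := hmax.2 ⟨_, le_max_of_le_left (by positivity : 0 ≤ φ + ve / ae), hT⟩
      rwa [max_left_comm, max_eq_right hD]
    · obtain ⟨hte, htl⟩ := stopTimes_le_crossingTime hal hae hcross.1
        (not_lt.1 fun h => hcond ⟨hcross.1, hcross.2, h⟩)
      rwa [integral_approachRate_of_stopped hvl hve hal hae hφ hte htl] at hmax
  · rw [if_neg fun h => hcross ⟨h.1, h.2.1⟩, ← hT]
    exact isGreatest_approach_of_not_crossing hve hal hae hφ hcross (le_max_left _ _)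
      (le_max_right _ _)
end

section
/- Let F, G, W, h, (u_k), and the disturbed trajectory x_{k+1} = F x_k + G u_k + h + W w_k and nominal trajectory x̄_{k+1} = F x̄_k + G u_k + h with x̄_0 = x_0 be as in the linear affine disturbance model. Let A be a real N_c × N_x matrix, B a real N_c × N_u matrix, and c ∈ ℝ^{N_c}. Fix k ≥ 0 and suppose the robustified constraint A x̄_k + B u_k + c + Σ_{i=0}^{k−1} |A F^{k−1−i} W|·𝟙 ≤ 0 holds componentwise, where |·| is the entrywise absolute value and 𝟙 is the all-ones vector. Then for every disturbance sequence with ‖w_i‖_∞ ≤ 1 for all 0 ≤ i ≤ k−1, the original constraint holds: A x_k + B u_k + c ≤ 0 componentwise. -/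
open Finset Matrix

theorem trajectory_eq_nominal_add_sum_disturbances {n p R : Type*} [Fintype n] [DecidableEq n]
    [Fintype p] [Semiring R] (F : Matrix n n R) (W : Matrix n p R) (g : ℕ → n → R)
    (xbar x : ℕ → n → R) (w : ℕ → p → R)
    (hxbar : ∀ m, xbar (m + 1) = F *ᵥ xbar m + g m)
    (hx : ∀ m, x (m + 1) = F *ᵥ x m + g m + W *ᵥ w m) (hx0 : x 0 = xbar 0) (m : ℕ) :
    x m = xbar m + ∑ i ∈ range m, (F ^ (m - 1 - i) * W) *ᵥ w i := by
  induction m with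
  | zero => simp [hx0]
  | succ m ih =>
    have hshift : ∀ i ∈ range m,
        (F ^ (m + 1 - 1 - i) * W) *ᵥ w i = F *ᵥ ((F ^ (m - 1 - i) * W) *ᵥ w i) := by
      intro i hi
      rw [show m + 1 - 1 - i = m - 1 - i + 1 by grind, pow_succ', Matrix.mul_assoc,
        mulVec_mulVec]
    rw [hx, hxbar, ih, sum_range_succ, sum_congr rfl hshift, mulVec_add, mulVec_sum,
      show m + 1 - 1 - m = 0 by omega, pow_zero, Matrix.one_mul]
    abel

theorem Matrix.abs_mulVec_apply_le {m n : Type*} [Fintype n] (M : Matrix m n ℝ) (v : n → ℝ)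
    (j : m) : |(M *ᵥ v) j| ≤ (∑ l, |M j l|) * ‖v‖ :=
  calc |(M *ᵥ v) j| ≤ ∑ l, |M j l| * |v l| := by
        simpa only [mulVec, dotProduct, abs_mul] using abs_sum_le_sum_abs (fun l ↦ M j l * v l) univ
    _ ≤ ∑ l, |M j l| * ‖v‖ := by
        gcongr with l
        exact norm_le_pi_norm v l
    _ = (∑ l, |M j l|) * ‖v‖ := (sum_mul ..).symm

/-- If the robustified constraint
`A x̄_k + B u_k + c + Σ_{i=0}^{k−1} |A F^{k−1−i} W|·𝟙 ≤ 0` holds componentwise on the nominal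
trajectory, then for every disturbance sequence with `‖w_i‖_∞ ≤ 1` (for `0 ≤ i ≤ k−1`) the
original constraint `A x_k + B u_k + c ≤ 0` holds componentwise on the disturbed trajectory. -/
theorem robustified_constraint_implies_constraint
    (Nx Nu Nw Nc : ℕ)
    (F : Matrix (Fin Nx) (Fin Nx) ℝ) (G : Matrix (Fin Nx) (Fin Nu) ℝ)
    (W : Matrix (Fin Nx) (Fin Nw) ℝ) (h : Fin Nx → ℝ)
    (A : Matrix (Fin Nc) (Fin Nx) ℝ) (B : Matrix (Fin Nc) (Fin Nu) ℝ) (c : Fin Nc → ℝ)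
    (u : ℕ → Fin Nu → ℝ) (xbar : ℕ → Fin Nx → ℝ)
    (hxbar : ∀ m, xbar (m + 1) = F.mulVec (xbar m) + G.mulVec (u m) + h)
    (k : ℕ)
    (hrobust : ∀ j, A.mulVec (xbar k) j + B.mulVec (u k) j + c j +
        ∑ i ∈ Finset.range k, ∑ l, |(A * F ^ (k - 1 - i) * W) j l| ≤ 0) :
    ∀ (w : ℕ → Fin Nw → ℝ) (x : ℕ → Fin Nx → ℝ),
      (∀ i, i < k → ‖w i‖ ≤ 1) →
      x 0 = xbar 0 →
      (∀ m, x (m + 1) = F.mulVec (x m) + G.mulVec (u m) + h + W.mulVec (w m)) →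
      ∀ j, A.mulVec (x k) j + B.mulVec (u k) j + c j ≤ 0 := by
  intro w x hw hx0 hx j
  have hxk := trajectory_eq_nominal_add_sum_disturbances F W (fun m ↦ G *ᵥ u m + h) xbar x w
    (fun m ↦ by rw [hxbar, add_assoc]) (fun m ↦ by rw [hx, add_assoc (F *ᵥ x m)]) hx0 k
  have hAxk : (A *ᵥ x k) j =
      (A *ᵥ xbar k) j + ∑ i ∈ range k, ((A * F ^ (k - 1 - i) * W) *ᵥ w i) j := by
    simp only [hxk, mulVec_add, mulVec_sum, mulVec_mulVec, Matrix.mul_assoc, Pi.add_apply,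
      Finset.sum_apply]
  have hdisturbance : ∀ i ∈ range k,
      ((A * F ^ (k - 1 - i) * W) *ᵥ w i) j ≤ ∑ l, |(A * F ^ (k - 1 - i) * W) j l| := by
    intro i hi
    calc _ ≤ |((A * F ^ (k - 1 - i) * W) *ᵥ w i) j| := le_abs_self _
      _ ≤ (∑ l, |(A * F ^ (k - 1 - i) * W) j l|) * ‖w i‖ := abs_mulVec_apply_le _ _ _
      _ ≤ ∑ l, |(A * F ^ (k - 1 - i) * W) j l| :=
        mul_le_of_le_one_right (by positivity) (hw i (mem_range.mp hi))
  linarith [hrobust j, sum_le_sum hdisturbance]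
end
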